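/- Let f be a real number with −1/2 < f < 0 and set y* = −f/(1+f), so 0 < y* < 1. Then for every real r with 0 < r < min(y*, 1−y*), one has (2πi)^{−1}·∮_{|y−y*|=r} θ(y)·Ψ̂_1(y;f) dy = 1/(f(1+f)). Equivalently, the residue of θ(y)Ψ_1(y;f) at the ramification point y = −f/(1+f) equals −1/(f(1+f)). -/

import Mathlib

open Complex

/-- The functions `Ψ̂_n(·;f)`, defined recursively by
`Ψ̂_0(y;f) = -1/(f+(f+1)y)^2` and
`Ψ̂_n(y;f) = -(d/dy)[Ψ̂_{n-1}(y;f) · y(y+1)/(f+(f+1)y)]`. -/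
noncomputable def PsiHat (f : ℂ) : ℕ → ℂ → ℂ
  | 0 => fun y => -1 / (f + (f + 1) * y) ^ 2
  | n + 1 => fun y =>
      -deriv (fun w => PsiHat f n w * (w * (w + 1) / (f + (f + 1) * w))) y

/-- The primitive `θ(y) = (f/2)(log y)^2 + (log y)·log(1+y) + Li₂(-y)`,
with `log` the principal branch and `Li₂(w) = ∑_{k≥1} w^k/k^2`. -/
noncomputable def theta (f : ℂ) (y : ℂ) : ℂ :=
  f / 2 * Complex.log y ^ 2 + Complex.log y * Complex.log (1 + y) +
    ∑' k : ℕ, (-y) ^ (k + 1) / ((k : ℂ) + 1) ^ 2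

/-! Ψ̂₁ is the derivative of `g(y) = y(y+1)/(f+(f+1)y)³`, and `θ'(y) = log y · (f+(f+1)y)/(y(y+1))`
(the `Li₂` term contributes `-log(1+y)/y`). Integrating by parts on the circle therefore turns
`∮ θ Ψ̂₁` into `-∮ log y/(f+(f+1)y)² = -(f+1)⁻² ∮ log y/(y-y*)²`, which Cauchy's formula for the
derivative evaluates to `-2πi/((f+1)² y*) = 2πi/(f(1+f))`. -/

open Metric Real

theorem hasDerivAt_dilogSeries {w : ℂ} (hw : ‖w‖ < 1) (hw0 : w ≠ 0) :
    HasDerivAt (fun z : ℂ => ∑' k : ℕ, z ^ (k + 1) / ((k : ℂ) + 1) ^ 2)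
      (-Complex.log (1 - w) / w) w := by
  obtain ⟨ρ, hwρ, hρ1⟩ := exists_between hw
  have hρ0 : 0 < ρ := (norm_nonneg w).trans_lt hwρ
  have hderiv : HasDerivAt (fun z : ℂ => ∑' k : ℕ, z ^ (k + 1) / ((k : ℂ) + 1) ^ 2)
      (∑' k : ℕ, w ^ k / ((k : ℂ) + 1)) w := by
    refine hasDerivAt_tsum_of_isPreconnected
      (g := fun (k : ℕ) z => z ^ (k + 1) / ((k : ℂ) + 1) ^ 2)
      (g' := fun (k : ℕ) z => z ^ k / ((k : ℂ) + 1)) (summable_geometric_of_lt_one hρ0.le hρ1)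
      isOpen_ball (convex_ball 0 ρ).isPreconnected (fun k z _ => ?_) (fun k z hz => ?_)
      (mem_ball_self hρ0) ?_ (mem_ball_zero_iff.mpr hwρ)
    · have hk : ((k : ℂ) + 1) ≠ 0 := Nat.cast_add_one_ne_zero k
      refine ((hasDerivAt_pow (k + 1) z).div_const (((k : ℂ) + 1) ^ 2)).congr_deriv ?_
      rw [Nat.add_sub_cancel]
      push_cast
      field_simp
    · rw [mem_ball_zero_iff] at hz
      rw [norm_div, norm_pow]
      calc ‖z‖ ^ k / ‖(k : ℂ) + 1‖ ≤ ‖z‖ ^ k := by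
            apply div_le_self (by positivity)
            rw [← Nat.cast_add_one, Complex.norm_natCast]
            exact_mod_cast Nat.le_add_left 1 k
        _ ≤ ρ ^ k := by gcongr
    · simp
  have hsum : HasSum (fun k : ℕ => w * (w ^ k / ((k : ℂ) + 1))) (-Complex.log (1 - w)) := by
    convert Complex.hasSum_taylorSeries_neg_log' hw using 2 with k
    ring
  convert hderiv using 1
  rw [div_eq_iff hw0, ← hsum.tsum_eq, tsum_mul_left, mul_comm]

theorem hasDerivAt_theta (f : ℂ) {y : ℂ} (hy : y ∈ slitPlane) (hy1 : ‖y‖ < 1) :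
    HasDerivAt (theta f) (Complex.log y * (f + (f + 1) * y) / (y * (y + 1))) y := by
  have hy0 : y ≠ 0 := slitPlane_ne_zero hy
  have hy1' : 1 + y ∈ slitPlane := mem_slitPlane_of_norm_lt_one hy1
  have hlog := Complex.hasDerivAt_log hy
  have hlog1 : HasDerivAt (fun z : ℂ => Complex.log (1 + z)) (1 + y)⁻¹ y := by
    simpa using ((hasDerivAt_id y).const_add 1).clog hy1'
  have hdilog : HasDerivAt (fun z : ℂ => ∑' k : ℕ, (-z) ^ (k + 1) / ((k : ℂ) + 1) ^ 2)
      (-Complex.log (1 - -y) / -y * -1) y :=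
    (hasDerivAt_dilogSeries (by rwa [norm_neg]) (neg_ne_zero.mpr hy0)).comp y (hasDerivAt_neg y)
  refine ((((hlog.pow 2).const_mul (f / 2)).add (hlog.mul hlog1)).add hdilog).congr_deriv ?_
  have : y + 1 ≠ 0 := add_comm 1 y ▸ slitPlane_ne_zero hy1'
  rw [sub_neg_eq_add, add_comm 1 y]
  field_simp
  ring

theorem circleIntegral_mul_deriv_eq_neg {U : Set ℂ} {u v : ℂ → ℂ} {c : ℂ} {R : ℝ} (hR : 0 ≤ R)
    (hU : IsOpen U) (hsU : sphere c R ⊆ U) (hu : DifferentiableOn ℂ u U)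
    (hv : DifferentiableOn ℂ v U) :
    (∮ z in C(c, R), u z * deriv v z) = -∮ z in C(c, R), deriv u z * v z := by
  have hcont {w : ℂ → ℂ} (hw : DifferentiableOn ℂ w U) : ContinuousOn w (sphere c R) :=
    hw.continuousOn.mono hsU
  have hsum : (∮ z in C(c, R), deriv u z * v z + u z * deriv v z) = 0 :=
    circleIntegral.integral_eq_zero_of_hasDerivWithinAt hR fun z hz =>
      (((hu.differentiableAt (hU.mem_nhds (hsU hz))).hasDerivAt.mul
        (hv.differentiableAt (hU.mem_nhds (hsU hz))).hasDerivAt)).hasDerivWithinAt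
  have hint₁ : CircleIntegrable (fun z => deriv u z * v z) c R :=
    ((hcont (hu.deriv hU)).mul (hcont hv)).circleIntegrable hR
  have hint₂ : CircleIntegrable (fun z => u z * deriv v z) c R :=
    ((hcont hu).mul (hcont (hv.deriv hU))).circleIntegrable hR
  rw [circleIntegral.integral_add hint₁ hint₂] at hsum
  exact eq_neg_of_add_eq_zero_right hsum

theorem PsiHat_one_eq_deriv (f : ℂ) :
    PsiHat f 1 = deriv fun w => w * (w + 1) / (f + (f + 1) * w) ^ 3 := by
  ext y
  have hprod : (fun w => PsiHat f 0 w * (w * (w + 1) / (f + (f + 1) * w))) =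
      fun w => -(w * (w + 1) / (f + (f + 1) * w) ^ 3) := by
    ext w
    simp only [PsiHat]
    rw [div_mul_div_comm, neg_one_mul, neg_div, ← pow_succ]
  simp only [PsiHat] at hprod ⊢
  rw [hprod, deriv.fun_neg, neg_neg]

theorem circleIntegral_theta_mul_PsiHat_one {f c : ℂ} {R : ℝ} (hR : 0 < R) (hf : f + 1 ≠ 0)
    (hc : f + (f + 1) * c = 0) (hball : closedBall c R ⊆ slitPlane ∩ ball 0 1) :
    (∮ y in C(c, R), theta f y * PsiHat f 1 y) = -(2 * π * I) / ((f + 1) ^ 2 * c) := by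
  set U : Set ℂ := slitPlane ∩ ball 0 1 ∩ {c}ᶜ
  have hU : IsOpen U := (isOpen_slitPlane.inter isOpen_ball).inter isOpen_compl_singleton
  have hsU : sphere c R ⊆ U := fun y hy =>
    ⟨hball (sphere_subset_closedBall hy), ne_of_mem_sphere hy hR.ne'⟩
  have hD (y : ℂ) : f + (f + 1) * y = (f + 1) * (y - c) := by linear_combination hc
  have hθ (y : ℂ) (hy : y ∈ U) := hasDerivAt_theta f hy.1.1 (mem_ball_zero_iff.mp hy.1.2)
  have hg : DifferentiableOn ℂ (fun w => w * (w + 1) / (f + (f + 1) * w) ^ 3) U := by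
    intro y hy
    have : y - c ≠ 0 := sub_ne_zero.mpr hy.2
    refine DifferentiableAt.differentiableWithinAt ?_
    simp only [hD]
    fun_prop (disch := simp [hf, this])
  have hlog : DifferentiableOn ℂ Complex.log (closedBall c R) := fun y hy =>
    (hasDerivAt_log (hball hy).1).differentiableAt.differentiableWithinAt
  have hc0 : c ∈ slitPlane := (hball (mem_closedBall_self hR.le)).1
  have hparts := circleIntegral_mul_deriv_eq_neg hR.le hU hsU
    (fun y hy => (hθ y hy).differentiableAt.differentiableWithinAt) hg
  calc (∮ y in C(c, R), theta f y * PsiHat f 1 y)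
      = ∮ y in C(c, R), theta f y * deriv (fun w => w * (w + 1) / (f + (f + 1) * w) ^ 3) y := by
        rw [PsiHat_one_eq_deriv]
    _ = -∮ y in C(c, R), deriv (theta f) y * (y * (y + 1) / (f + (f + 1) * y) ^ 3) := hparts
    _ = -∮ y in C(c, R), ((f + 1) ^ 2)⁻¹ • ((1 / (y - c) ^ 2) • Complex.log y) := by
        congr 1
        refine circleIntegral.integral_congr hR.le fun y hy => ?_
        have hy0 : y ≠ 0 := slitPlane_ne_zero (hsU hy).1.1
        have hy1 : y + 1 ≠ 0 := add_comm 1 y ▸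
          slitPlane_ne_zero (mem_slitPlane_of_norm_lt_one (mem_ball_zero_iff.mp (hsU hy).1.2))
        have hyc : y - c ≠ 0 := sub_ne_zero.mpr (hsU hy).2
        simp only [(hθ y (hsU hy)).deriv, hD, smul_eq_mul]
        field_simp
    _ = -(2 * π * I) / ((f + 1) ^ 2 * c) := by
        rw [circleIntegral.integral_smul, hlog.deriv_eq_smul_circleIntegral hR, deriv_log hc0,
          smul_eq_mul, smul_eq_mul]
        have : c ≠ 0 := slitPlane_ne_zero hc0
        field_simp

theorem closedBall_ofReal_subset_slitPlane_inter_ball {s r : ℝ} (hrs : r < s) (hrs' : r < 1 - s) :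
    closedBall (s : ℂ) r ⊆ slitPlane ∩ ball 0 1 := by
  intro y hy
  rw [mem_closedBall, Complex.dist_eq] at hy
  have hre : s - r ≤ y.re := by
    have := (neg_le_abs (y - s).re).trans (abs_re_le_norm (y - s))
    simp only [sub_re, ofReal_re] at this
    linarith
  have hnorm : ‖y‖ < 1 := calc
    ‖y‖ ≤ ‖(s : ℂ)‖ + ‖y - s‖ := norm_le_norm_add_norm_sub' y s
    _ ≤ |s| + r := by rw [norm_real, Real.norm_eq_abs]; gcongr
    _ < 1 := by linarith [abs_lt.mpr (⟨by linarith, by linarith⟩ : -(1 - r) < s ∧ s < 1 - r)]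
  exact ⟨Or.inl (by linarith), mem_ball_zero_iff.mpr hnorm⟩

theorem residue_theta_psi_one_general
    (f : ℝ) (hf₁ : -1/2 < f) (r : ℝ) (hr : 0 < r)
    (hr' : r < min (-f / (1 + f)) (1 - -f / (1 + f))) :
    (2 * Real.pi * Complex.I)⁻¹ *
      (∮ y in C(((-f / (1 + f) : ℝ) : ℂ), r),
        theta (f : ℂ) y * PsiHat (f : ℂ) 1 y) =
      1 / ((f : ℂ) * (1 + (f : ℂ))) := by
  have hf1 : (f : ℂ) + 1 ≠ 0 := by exact_mod_cast (show f + 1 ≠ 0 by linarith)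
  have hc : (f : ℂ) + (f + 1) * ((-f / (1 + f) : ℝ) : ℂ) = 0 := by
    push_cast
    rw [add_comm 1 (f : ℂ)]
    field_simp
    ring
  rw [circleIntegral_theta_mul_PsiHat_one hr hf1 hc
    (closedBall_ofReal_subset_slitPlane_inter_ball (hr'.trans_le (min_le_left _ _))
      (hr'.trans_le (min_le_right _ _)))]
  push_cast
  rw [add_comm 1 (f : ℂ)]
  field_simp

/-- Lemma 3.2, `n = 1` case: the residue of `θ(y)Ψ_1(y;f)` at the ramification
point `y* = -f/(1+f)` equals `-1/(f(1+f))`; equivalently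
`(2πi)⁻¹ ∮ θ(y) Ψ̂_1(y;f) dy = 1/(f(1+f))` over small circles around `y*`. -/
theorem residue_theta_psi_one
    (f : ℝ) (hf₁ : -1/2 < f) (hf₂ : f < 0) (r : ℝ) (hr : 0 < r)
    (hr' : r < min (-f / (1 + f)) (1 - -f / (1 + f))) :
    (2 * Real.pi * Complex.I)⁻¹ *
      (∮ y in C(((-f / (1 + f) : ℝ) : ℂ), r),
        theta (f : ℂ) y * PsiHat (f : ℂ) 1 y) =
      1 / ((f : ℂ) * (1 + (f : ℂ))) :=
  residue_theta_psi_one_general f hf₁ r hr hr'
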